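/- arXiv:2002.06341 — 2 statements merged into one kernel-verified Lean document; each statement's English description precedes it below -/
import Mathlib

section
/- Let V be a set of voters, A a set of alternatives, and a, b two distinct alternatives. Let φ be a social choice function defined on the set of all strict profiles over V whose range is {a,b} (of cardinality two). Then φ is coalitionally strategy-proof if and only if there exists a nonempty family F of coalitions of voters (F ⊆ 2^V, not containing the empty set) that is closed under supersets, such that for every strict profile P: φ(P) = a if D(a,P) ∈ F, and φ(P) = b if D(a,P) ∉ F. -/
universe u v

variable {V : Type u} {A : Type v}

/-- A strict (linear) ordering on `A`: complete, transitive and antisymmetric. -/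
abbrev StrictOrd (A : Type v) := {W : A → A → Prop // Total W ∧ Transitive W ∧ AntiSymmetric W}

/-- A strict profile assigns to every voter a strict ordering on the alternatives. -/
abbrev SProfile (V : Type u) (A : Type v) := V → StrictOrd A

/-- Strict preference `x ≻_W y`. -/
def SPref (W : StrictOrd A) (x y : A) : Prop := W.1 x y ∧ ¬ W.1 y x

/-- `D(a,P)` (relative to the pair `{a,b}`): voters strictly preferring `a` to `b`. -/
def Dset (a b : A) (P : SProfile V A) : Set V := {v | SPref (P v) a b}

/-- The coalition `D` can manipulate the strict profile `P` under `φ`. -/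
def Manipulates (φ : SProfile V A → A) (D : Set V) (P : SProfile V A) : Prop :=
  D.Nonempty ∧ ∃ Q : SProfile V A, (∀ v ∉ D, Q v = P v) ∧ ∀ v ∈ D, SPref (P v) (φ Q) (φ P)

/-- Coalitional strategy-proofness (over strict profiles). -/
def CSP (φ : SProfile V A → A) : Prop :=
  ∀ (D : Set V) (P : SProfile V A), ¬ Manipulates φ D P

lemma spref_asymm (W : StrictOrd A) {x y : A} (h : SPref W x y) : ¬ SPref W y x :=
  fun h' => h.2 h'.1

lemma spref_or (W : StrictOrd A) {x y : A} (hxy : x ≠ y) :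
    SPref W x y ∨ SPref W y x := by
  rcases W.2.1 x y with h | h
  · by_cases h' : W.1 y x
    · exact absurd (W.2.2.2 h h') hxy
    · exact Or.inl ⟨h, h'⟩
  · by_cases h' : W.1 x y
    · exact absurd (W.2.2.2 h' h) hxy
    · exact Or.inr ⟨h, h'⟩

lemma spref_of_not (W : StrictOrd A) {x y : A} (hxy : x ≠ y) (h : ¬ SPref W x y) :
    SPref W y x := (spref_or W hxy).resolve_left h

open Classical in
noncomputable def swapMap (a b : A) (x : A) : A :=
  if x = a then b else if x = b then a else x

lemma swapMap_left (a b : A) : swapMap a b a = b := by simp [swapMap]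

lemma swapMap_right (a b : A) : swapMap a b b = a := by
  unfold swapMap; split_ifs with h <;> simp_all

lemma swapMap_other (a b : A) {x : A} (h1 : x ≠ a) (h2 : x ≠ b) : swapMap a b x = x := by
  simp [swapMap, h1, h2]

lemma swapMap_invol (a b x : A) : swapMap a b (swapMap a b x) = x := by
  by_cases h1 : x = a
  · subst h1; rw [swapMap_left, swapMap_right]
  · by_cases h2 : x = b
    · subst h2; rw [swapMap_right, swapMap_left]
    · rw [swapMap_other a b h1 h2, swapMap_other a b h1 h2]

lemma swapMap_inj (a b : A) {x y : A} (h : swapMap a b x = swapMap a b y) : x = y := by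
  have := congrArg (swapMap a b) h
  rwa [swapMap_invol, swapMap_invol] at this

noncomputable def flipW (a b : A) (W : StrictOrd A) : StrictOrd A :=
  ⟨fun x y => W.1 (swapMap a b x) (swapMap a b y),
   fun x y => W.2.1 _ _,
   fun _ _ _ h1 h2 => W.2.2.1 h1 h2,
   fun _ _ h1 h2 => swapMap_inj a b (W.2.2.2 h1 h2)⟩

lemma spref_flip (a b : A) (W : StrictOrd A) :
    SPref (flipW a b W) a b ↔ SPref W b a := by
  simp [SPref, flipW, swapMap_left, swapMap_right]

/-- Core lemma: under CSP, two profiles with the same `D(a,·)` cannot give the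
opposite outcomes `a` and `b`. -/
lemma core_ab {a b : A} {φ : SProfile V A → A} (hab : a ≠ b) (hcsp : CSP φ)
    (hor : ∀ S, φ S = a ∨ φ S = b)
    {P Q : SProfile V A} (hP : φ P = a) (hQ : φ Q = b)
    (hD : Dset a b P = Dset a b Q) : False := by
  classical
  set E := Dset a b P with hE
  set R : SProfile V A := fun v => if v ∈ E then P v else Q v with hR
  have hRa : φ R = a := by
    rcases hor R with h | h
    · exact h
    · exfalso
      have hne : R ≠ P := by
        intro hEq
        exact hab (by rw [← hP, ← h, hEq])
      obtain ⟨v, hv⟩ := Function.ne_iff.mp hne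
      have hvE : v ∉ E := fun hvE => hv (if_pos hvE)
      refine hcsp Eᶜ P ⟨⟨v, hvE⟩, R, ?_, ?_⟩
      · intro w hw
        exact if_pos (not_not.mp hw)
      · intro w hw
        rw [h, hP]
        exact spref_of_not (P w) hab hw
  have hne : R ≠ Q := by
    intro hEq
    exact hab (by rw [← hRa, hEq, hQ])
  obtain ⟨v, hv⟩ := Function.ne_iff.mp hne
  have hvE : v ∈ E := by
    by_contra hvE
    exact hv (if_neg hvE)
  refine hcsp E Q ⟨⟨v, hvE⟩, R, ?_, ?_⟩
  · intro w hw
    exact if_neg hw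
  · intro w hw
    rw [hRa, hQ]
    have : w ∈ Dset a b Q := hD ▸ hw
    exact this

/-- Under CSP, the outcome depends only on `D(a,·)`. -/
lemma well_defined {a b : A} {φ : SProfile V A → A} (hab : a ≠ b) (hcsp : CSP φ)
    (hor : ∀ S, φ S = a ∨ φ S = b)
    {P Q : SProfile V A} (hD : Dset a b P = Dset a b Q) : φ P = φ Q := by
  rcases hor P with hP | hP <;> rcases hor Q with hQ | hQ
  · rw [hP, hQ]
  · exact absurd (core_ab hab hcsp hor hP hQ hD) not_false
  · exact absurd (core_ab hab hcsp hor hQ hP hD.symm) not_false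
  · rw [hP, hQ]

/-- Monotonicity: if some profile with `D(a,P) ⊆ E'` yields `a`, then there is a
profile with `D(a,·) = E'` yielding `a`. -/
lemma mono_exists {a b : A} {φ : SProfile V A → A} (hab : a ≠ b) (hcsp : CSP φ)
    (hor : ∀ S, φ S = a ∨ φ S = b)
    {P : SProfile V A} (hP : φ P = a) {E' : Set V} (hsub : Dset a b P ⊆ E') :
    ∃ R : SProfile V A, Dset a b R = E' ∧ φ R = a := by
  classical
  set E := Dset a b P with hE
  set R : SProfile V A := fun v => if v ∈ E' \ E then flipW a b (P v) else P v with hR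
  have hDR : Dset a b R = E' := by
    ext v
    show SPref (R v) a b ↔ v ∈ E'
    by_cases h : v ∈ E' \ E
    · rw [show R v = flipW a b (P v) from if_pos h]
      constructor
      · intro _; exact h.1
      · intro _
        exact (spref_flip a b (P v)).mpr (spref_of_not (P v) hab h.2)
    · rw [show R v = P v from if_neg h]
      have hvE : v ∈ E ↔ v ∈ E' := by
        constructor
        · exact fun hv => hsub hv
        · intro hv
          by_contra hvE
          exact h ⟨hv, hvE⟩
      show v ∈ E ↔ v ∈ E'
      exact hvE
  refine ⟨R, hDR, ?_⟩
  rcases hor R with h | h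
  · exact h
  · exfalso
    have hne : R ≠ P := by
      intro hEq
      exact hab (by rw [← hP, ← h, hEq])
    obtain ⟨v, hv⟩ := Function.ne_iff.mp hne
    have hvD : v ∈ E' \ E := by
      by_contra hvD
      exact hv (if_neg hvD)
    refine hcsp (E' \ E) R ⟨⟨v, hvD⟩, P, ?_, ?_⟩
    · intro w hw
      exact (if_neg hw).symm
    · intro w hw
      rw [h, hP]
      have : w ∈ Dset a b R := hDR.symm ▸ hw.1
      exact this

/-- Theorem 1.1(i): an scf on strict profiles with range `{a,b}` of cardinality two is
coalitionally strategy-proof iff it is given by voting by a (nonempty, superset-closed,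
not containing `∅`) family `F` of coalitions: `φ P = a` if `D(a,P) ∈ F` and `φ P = b`
if `D(a,P) ∉ F`. -/
theorem two_valued_strict_representation
    (a b : A) (hab : a ≠ b) (φ : SProfile V A → A)
    (hrange : Set.range φ = {a, b}) :
    CSP φ ↔
      ∃ F : Set (Set V), F.Nonempty ∧ ∅ ∉ F ∧
        (∀ E₁ E₂ : Set V, E₁ ∈ F → E₁ ⊆ E₂ → E₂ ∈ F) ∧
        ∀ P : SProfile V A,
          (Dset a b P ∈ F → φ P = a) ∧ (Dset a b P ∉ F → φ P = b) := by
  have hor : ∀ S : SProfile V A, φ S = a ∨ φ S = b := by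
    intro S
    have : φ S ∈ Set.range φ := ⟨S, rfl⟩
    rw [hrange] at this
    simpa using this
  obtain ⟨Pa, hPa⟩ : ∃ P, φ P = a := by
    have : a ∈ Set.range φ := by rw [hrange]; simp
    exact this
  obtain ⟨Pb, hPb⟩ : ∃ P, φ P = b := by
    have : b ∈ Set.range φ := by rw [hrange]; simp
    exact this
  have hV : Nonempty V := by
    by_contra h
    have hPP : Pa = Pb := funext fun v => ((not_nonempty_iff.mp h).false v).elim
    exact hab (by rw [← hPa, hPP, hPb])
  constructor
  · intro hcsp
    refine ⟨{E : Set V | ∃ P : SProfile V A, Dset a b P = E ∧ φ P = a},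
      ⟨Dset a b Pa, Pa, rfl, hPa⟩, ?_, ?_, ?_⟩
    · rintro ⟨P, hDP, hPA⟩
      refine hcsp Set.univ P ⟨Set.univ_nonempty, Pb, ?_, ?_⟩
      · intro v hv
        exact absurd (Set.mem_univ v) hv
      · intro v _
        rw [hPb, hPA]
        refine spref_of_not (P v) hab ?_
        intro hv
        exact (Set.eq_empty_iff_forall_notMem.mp hDP v) hv
    · rintro E₁ E₂ ⟨P, hDP, hPA⟩ hsub
      obtain ⟨R, hDR, hRa⟩ := mono_exists hab hcsp hor hPA (hDP ▸ hsub)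
      exact ⟨R, hDR, hRa⟩
    · intro P
      constructor
      · rintro ⟨Q, hDQ, hQa⟩
        exact (well_defined hab hcsp hor hDQ.symm).trans hQa
      · intro h
        rcases hor P with ha | hb
        · exact absurd ⟨P, rfl, ha⟩ h
        · exact hb
  · rintro ⟨F, hFne, hFe, hFmono, hFrep⟩ D P ⟨hDne, Q, hQeq, hpref⟩
    obtain ⟨v0, hv0⟩ := hDne
    have hPQ : φ Q ≠ φ P := by
      intro h
      have hsp := hpref v0 hv0
      rw [h] at hsp
      exact hsp.2 hsp.1
    rcases hor P with hPa' | hPb'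
    · have hQb : φ Q = b := by
        rcases hor Q with h | h
        · exact absurd (h.trans hPa'.symm) hPQ
        · exact h
      have hsub : Dset a b P ⊆ Dset a b Q := by
        intro v hv
        have hvD : v ∉ D := by
          intro hvD
          have hsp := hpref v hvD
          rw [hQb, hPa'] at hsp
          exact spref_asymm _ hv hsp
        show SPref (Q v) a b
        rw [hQeq v hvD]
        exact hv
      have hPF : Dset a b P ∈ F := by
        by_contra h
        exact hab (hPa'.symm.trans ((hFrep P).2 h))
      have hQa : φ Q = a := (hFrep Q).1 (hFmono _ _ hPF hsub)
      exact hab (hQa.symm.trans hQb)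
    · have hQa : φ Q = a := by
        rcases hor Q with h | h
        · exact h
        · exact absurd (h.trans hPb'.symm) hPQ
      have hsub : Dset a b Q ⊆ Dset a b P := by
        intro v hv
        by_cases hvD : v ∈ D
        · have hsp := hpref v hvD
          rw [hQa, hPb'] at hsp
          exact hsp
        · show SPref (P v) a b
          rw [← hQeq v hvD]
          exact hv
      have hQF : Dset a b Q ∈ F := by
        by_contra h
        exact hab (hQa.symm.trans ((hFrep Q).2 h))
      have hPA : φ P = a := (hFrep P).1 (hFmono _ _ hQF hsub)
      exact hab (hPA.symm.trans hPb')
end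

section
/- Let V be a set of voters and A a set of alternatives. Let φ be a social choice function defined on the set of all strict profiles over V whose range A* ⊆ A is finite of cardinality at least three. For x ∈ A* and a strict profile P, let D(x,P) = {v ∈ V : x is v's top choice among the alternatives in A* according to P_v}. Then φ is coalitionally strategy-proof if and only if there exists an ultrafilter F on V such that for every strict profile P, φ(P) is the unique alternative a ∈ A* with D(a,P) ∈ F. -/
universe u v

variable {V : Type u} {A : Type v}

/-- `D(c,P)` for `c ∈ A*`: voters whose top choice among the alternatives in `Astar`
is `c` (i.e. they strictly prefer `c` to every other alternative of `Astar`). -/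
def DTop (Astar : Set A) (c : A) (P : SProfile V A) : Set V :=
  {v | ∀ y ∈ Astar, y ≠ c → SPref (P v) c y}

/-! If every `DTop (φ P) P` lies in an ultrafilter `F`, two such sets meet, and a voter in both
refutes any manipulation from `P` to `Q`.

Conversely, call `E` decisive if `φ` never elects `d` when all of `E` strictly prefer an
attainable `c` to `d`. In the two-block profile where `E` ranks `x ≻ y` on top and everyone
else `y ≻ x`, the outcome is `x` or `y`; by strategy-proofness only these top pairs matter, and a
chain of block changes through a third alternative carries "`x` wins" to every ordered pair, hence
to decisiveness of `E`. So `E` or `Eᶜ` is decisive, and a Condorcet cycle on three alternatives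
shows that decisive coalitions are closed under intersection: they form an ultrafilter. As the
range is finite every voter has a top alternative in it, so the finitely many sets `DTop c P`
cover `V` and one of them is in the ultrafilter; decisiveness makes that `c` the outcome. -/

open Set
open scoped Classical

theorem SPref.irrefl (W : StrictOrd A) (x : A) : ¬ SPref W x x := fun h => h.2 h.1

theorem SPref.asymm {W : StrictOrd A} {x y : A} (h : SPref W x y) : ¬ SPref W y x :=
  fun h' => h.2 h'.1

theorem exists_spref_top (W : StrictOrd A) {S : Set A} (hS : S.Finite) (hne : S.Nonempty) :
    ∃ m ∈ S, ∀ y ∈ S, y ≠ m → SPref W m y := by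
  let _ : Preorder A :=
    { le := fun x y => W.1 y x
      le_refl := fun x => (W.2.1 x x).elim id id
      le_trans := fun _ _ _ hxy hyz => W.2.2.1 hyz hxy }
  obtain ⟨m, hmS, hmax⟩ := hS.exists_maximal hne
  refine ⟨m, hmS, fun y hy hym => ?_⟩
  have hmy : W.1 m y := (W.2.1 m y).elim id (hmax hy)
  exact ⟨hmy, fun hym' => hym (W.2.2.2 hym' hmy)⟩

/-- Rank alternatives by `r`, breaking ties by a fixed well-order; smaller rank is better. -/
noncomputable def StrictOrd.ofRank (r : A → ℕ) : StrictOrd A :=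
  letI : LinearOrder A := IsWellOrder.linearOrder WellOrderingRel
  ⟨fun x y => toLex (r x, x) ≤ toLex (r y, y), fun _ _ => le_total _ _, fun _ _ _ => le_trans,
    fun _ _ h h' => congrArg (fun p => (ofLex p).2) (le_antisymm h h')⟩

theorem StrictOrd.ofRank_spref {r : A → ℕ} {x y : A} (h : r x < r y) :
    SPref (StrictOrd.ofRank r) x y := by
  let _ : LinearOrder A := IsWellOrder.linearOrder WellOrderingRel
  have hlt : toLex (r x, x) < toLex (r y, y) := Prod.Lex.toLex_lt_toLex.2 (Or.inl h)
  exact ⟨hlt.le, hlt.not_ge⟩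

/-- `rankedOrd [a, b, c]` ranks `a ≻ b ≻ c` above all other alternatives. -/
noncomputable def rankedOrd (l : List A) : StrictOrd A := StrictOrd.ofRank l.idxOf

theorem rankedOrd_spref {l : List A} {x y : A} (h : l.idxOf x < l.idxOf y) :
    SPref (rankedOrd l) x y :=
  StrictOrd.ofRank_spref h

theorem rankedOrd_cons_spref {l : List A} {x c : A} (hc : c ≠ x) :
    SPref (rankedOrd (x :: l)) x c :=
  rankedOrd_spref (by simp [List.idxOf_cons_self, List.idxOf_cons_ne l hc.symm])

theorem rankedOrd_cons_cons_spref {l : List A} {x y c : A} (hxy : x ≠ y) (hcx : c ≠ x)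
    (hcy : c ≠ y) : SPref (rankedOrd (y :: x :: l)) x c :=
  rankedOrd_spref (by simp [List.idxOf_cons_ne _ hxy.symm, List.idxOf_cons_ne _ hcx.symm,
    List.idxOf_cons_ne _ hcy.symm, List.idxOf_cons_self])

theorem rankedOrd_spref_of_mem_of_notMem {l : List A} {x c : A} (hx : x ∈ l) (hc : c ∉ l) :
    SPref (rankedOrd l) x c :=
  rankedOrd_spref (by rw [List.idxOf_of_notMem hc]; exact List.idxOf_lt_length_of_mem hx)

theorem exists_mem_ne_ne_of_two_lt_encard {α : Type*} {s : Set α} (hs : 2 < s.encard) (x y : α) :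
    ∃ z ∈ s, z ≠ x ∧ z ≠ y := by
  by_contra! h
  have hsub : s ⊆ {x, y} := fun z hz => (eq_or_ne z x).elim Or.inl fun hzx => Or.inr (h z hz hzx)
  have hpair : ({x, y} : Set α).encard ≤ 2 :=
    (encard_insert_le _ _).trans (by rw [encard_singleton]; rfl)
  exact (encard_le_encard hsub).trans hpair |>.not_gt hs

def IsDecisive (φ : SProfile V A → A) (E : Set V) : Prop :=
  ∀ (P : SProfile V A) (c : A),
    c ∈ range φ → (∀ v ∈ E, SPref (P v) c (φ P)) → c = φ P

theorem IsDecisive.mono {φ : SProfile V A → A} {E E' : Set V} (h : IsDecisive φ E)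
    (hEE' : E ⊆ E') : IsDecisive φ E' :=
  fun P c hc hpref => h P c hc fun v hv => hpref v (hEE' hv)

theorem IsDecisive.apply_ne {φ : SProfile V A → A} {E : Set V} (h : IsDecisive φ E)
    {P : SProfile V A} {c d : A} (hc : c ∈ range φ) (hcd : c ≠ d)
    (hpref : ∀ v ∈ E, SPref (P v) c d) : φ P ≠ d :=
  fun hd => hcd (hd ▸ h P c hc (hd ▸ hpref))

noncomputable def blockProfile (E : Set V) (l₁ l₂ : List A) : SProfile V A :=
  fun v => if v ∈ E then rankedOrd l₁ else rankedOrd l₂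

theorem blockProfile_of_mem {E : Set V} {v : V} (l₁ l₂ : List A) (hv : v ∈ E) :
    blockProfile E l₁ l₂ v = rankedOrd l₁ :=
  if_pos hv

theorem blockProfile_of_notMem {E : Set V} {v : V} (l₁ l₂ : List A) (hv : v ∉ E) :
    blockProfile E l₁ l₂ v = rankedOrd l₂ :=
  if_neg hv

theorem blockProfile_compl (E : Set V) (l₁ l₂ : List A) :
    blockProfile Eᶜ l₂ l₁ = blockProfile E l₁ l₂ := by
  funext v
  by_cases hv : v ∈ E
  · rw [blockProfile_of_notMem _ _ (not_not.2 hv), blockProfile_of_mem _ _ hv]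
  · rw [blockProfile_of_mem _ _ hv, blockProfile_of_notMem _ _ hv]

def IsDecisiveFor (φ : SProfile V A → A) (E : Set V) (x y : A) : Prop :=
  φ (blockProfile E [x, y] [y, x]) = x

namespace CSP

variable {φ : SProfile V A → A}

theorem eq_of_forall_ne_spref (hφ : CSP φ) {P Q : SProfile V A}
    (h : ∀ v, Q v ≠ P v → SPref (P v) (φ Q) (φ P)) : φ Q = φ P := by
  by_contra hne
  obtain ⟨v, hv⟩ : ∃ v, Q v ≠ P v := by
    by_contra! hQP
    exact hne (congrArg φ (funext hQP))
  exact hφ {v | Q v ≠ P v} P ⟨⟨v, hv⟩, Q, fun _ hw => not_not.1 hw, h⟩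

theorem eq_of_forall_ne_top (hφ : CSP φ) {P Q : SProfile V A}
    (h : ∀ v, Q v ≠ P v → ∀ c ≠ φ P, SPref (Q v) (φ P) c) : φ Q = φ P := by
  by_contra hne
  exact hne (hφ.eq_of_forall_ne_spref fun v hv => h v (Ne.symm hv) _ hne).symm

theorem eq_of_forall_ne_spref_both (hφ : CSP φ) {P Q : SProfile V A} {a b : A}
    (hP : φ P = a ∨ φ P = b) (hQ : φ Q = a ∨ φ Q = b)
    (h : ∀ v, Q v ≠ P v → SPref (P v) b a ∧ SPref (Q v) b a) : φ Q = φ P := by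
  rcases hP with hP | hP <;> rcases hQ with hQ | hQ
  · rw [hP, hQ]
  · exact hφ.eq_of_forall_ne_spref fun v hv => hP ▸ hQ ▸ (h v hv).1
  · exact (hφ.eq_of_forall_ne_spref fun v hv => hP ▸ hQ ▸ (h v (Ne.symm hv)).2).symm
  · rw [hP, hQ]

theorem isDecisive_univ (hφ : CSP φ) : IsDecisive φ univ := by
  rintro P c ⟨R, rfl⟩ hpref
  exact hφ.eq_of_forall_ne_spref fun v _ => hpref v (mem_univ v)

theorem blockProfile_eq_or_eq (hφ : CSP φ) {E : Set V} {l₁ l₂ : List A} {x y : A}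
    (hx : x ∈ range φ) (h₁ : ∀ c, c ≠ x → c ≠ y → SPref (rankedOrd l₁) x c)
    (h₂ : ∀ c, c ≠ x → c ≠ y → SPref (rankedOrd l₂) x c) :
    φ (blockProfile E l₁ l₂) = x ∨ φ (blockProfile E l₁ l₂) = y := by
  by_contra! hne
  refine hφ.isDecisive_univ.apply_ne hx hne.1.symm (fun v _ => ?_) rfl
  by_cases hv : v ∈ E
  · rw [blockProfile_of_mem _ _ hv]; exact h₁ _ hne.1 hne.2
  · rw [blockProfile_of_notMem _ _ hv]; exact h₂ _ hne.1 hne.2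

theorem blockProfile_cons_cons_eq_or_eq (hφ : CSP φ) {E : Set V} {x y : A} (l₁ l₂ : List A)
    (hx : x ∈ range φ) (hxy : x ≠ y) :
    φ (blockProfile E (x :: y :: l₁) (y :: x :: l₂)) = x ∨
      φ (blockProfile E (x :: y :: l₁) (y :: x :: l₂)) = y :=
  hφ.blockProfile_eq_or_eq hx (fun _ hcx _ => rankedOrd_cons_spref hcx)
    (fun _ hcx hcy => rankedOrd_cons_cons_spref hxy hcx hcy)

theorem blockProfile_left_eq (hφ : CSP φ) {E : Set V} {l₁ l₁' l₂ : List A} {a b : A}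
    (h : φ (blockProfile E l₁ l₂) = a ∨ φ (blockProfile E l₁ l₂) = b)
    (h' : φ (blockProfile E l₁' l₂) = a ∨ φ (blockProfile E l₁' l₂) = b)
    (hl : SPref (rankedOrd l₁) b a) (hl' : SPref (rankedOrd l₁') b a) :
    φ (blockProfile E l₁' l₂) = φ (blockProfile E l₁ l₂) := by
  refine hφ.eq_of_forall_ne_spref_both h h' fun v hv => ?_
  by_cases hvE : v ∈ E
  · rw [blockProfile_of_mem _ _ hvE, blockProfile_of_mem _ _ hvE]; exact ⟨hl, hl'⟩
  · rw [blockProfile_of_notMem _ _ hvE, blockProfile_of_notMem _ _ hvE] at hv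
    exact absurd rfl hv

theorem blockProfile_right_eq (hφ : CSP φ) {E : Set V} {l₁ l₂ l₂' : List A} {a b : A}
    (h : φ (blockProfile E l₁ l₂) = a ∨ φ (blockProfile E l₁ l₂) = b)
    (h' : φ (blockProfile E l₁ l₂') = a ∨ φ (blockProfile E l₁ l₂') = b)
    (hl : SPref (rankedOrd l₂) b a) (hl' : SPref (rankedOrd l₂') b a) :
    φ (blockProfile E l₁ l₂') = φ (blockProfile E l₁ l₂) := by
  simp only [← blockProfile_compl E l₁ l₂, ← blockProfile_compl E l₁ l₂'] at h h' ⊢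
  exact hφ.blockProfile_left_eq h h' hl hl'

theorem blockProfile_cons_cons_eq (hφ : CSP φ) {E : Set V} {x y : A} (l₁ l₂ : List A)
    (hx : x ∈ range φ) (hxy : x ≠ y) :
    φ (blockProfile E (x :: y :: l₁) (y :: x :: l₂)) = φ (blockProfile E [x, y] [y, x]) := by
  calc φ (blockProfile E (x :: y :: l₁) (y :: x :: l₂))
      = φ (blockProfile E [x, y] (y :: x :: l₂)) :=
        hφ.blockProfile_left_eq (hφ.blockProfile_cons_cons_eq_or_eq _ _ hx hxy).symm
          (hφ.blockProfile_cons_cons_eq_or_eq _ _ hx hxy).symm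
          (rankedOrd_cons_spref hxy.symm) (rankedOrd_cons_spref hxy.symm)
    _ = φ (blockProfile E [x, y] [y, x]) :=
        hφ.blockProfile_right_eq (hφ.blockProfile_cons_cons_eq_or_eq _ _ hx hxy)
          (hφ.blockProfile_cons_cons_eq_or_eq _ _ hx hxy)
          (rankedOrd_cons_spref hxy) (rankedOrd_cons_spref hxy)

theorem isDecisiveFor_compl_iff (hφ : CSP φ) {E : Set V} {x y : A} (hx : x ∈ range φ)
    (hxy : x ≠ y) : IsDecisiveFor φ Eᶜ y x ↔ ¬ IsDecisiveFor φ E x y := by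
  rw [IsDecisiveFor, IsDecisiveFor, blockProfile_compl]
  exact ⟨fun hy hx' => hxy (hx'.symm.trans hy),
    (hφ.blockProfile_cons_cons_eq_or_eq [] [] hx hxy).resolve_left⟩

theorem isDecisiveFor_right (hφ : CSP φ) {E : Set V} {x y z : A} (hx : x ∈ range φ)
    (hy : y ∈ range φ) (hxy : x ≠ y) (hzx : z ≠ x) (h : IsDecisiveFor φ E x y) :
    IsDecisiveFor φ E x z := by
  rcases eq_or_ne z y with rfl | hzy
  · exact h
  have h₁ : φ (blockProfile E [x, y] [y, z, x]) = x :=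
    (hφ.blockProfile_right_eq (Or.inl h)
      (hφ.blockProfile_eq_or_eq hy (fun _ hcy hcx => rankedOrd_cons_cons_spref hxy.symm hcy hcx)
        (fun _ hcy _ => rankedOrd_cons_spref hcy)).symm
      (rankedOrd_cons_spref hxy) (rankedOrd_cons_spref hxy)).trans h
  have h₂ : φ (blockProfile E [x, z, y] [y, z, x]) = x := by
    refine (hφ.eq_of_forall_ne_top fun v hv c hc => ?_).trans h₁
    by_cases hvE : v ∈ E
    · rw [h₁] at hc ⊢
      rw [blockProfile_of_mem _ _ hvE]
      exact rankedOrd_cons_spref hc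
    · rw [blockProfile_of_notMem _ _ hvE, blockProfile_of_notMem _ _ hvE] at hv
      exact absurd rfl hv
  have h₃ : φ (blockProfile E [x, z, y] [z, x, y]) = x :=
    (hφ.blockProfile_right_eq (Or.inl h₂) (hφ.blockProfile_cons_cons_eq_or_eq _ _ hx hzx.symm)
      (rankedOrd_cons_cons_spref hzy hzx.symm hxy) (rankedOrd_cons_spref hzx.symm)).trans h₂
  exact (hφ.blockProfile_cons_cons_eq _ _ hx hzx.symm).symm.trans h₃

theorem isDecisiveFor_left (hφ : CSP φ) {E : Set V} {x y z : A} (hx : x ∈ range φ)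
    (hy : y ∈ range φ) (hz : z ∈ range φ) (hxy : x ≠ y) (hzy : z ≠ y)
    (h : IsDecisiveFor φ E x y) : IsDecisiveFor φ E z y := by
  by_contra hzE
  have hyz : IsDecisiveFor φ Eᶜ y z := (hφ.isDecisiveFor_compl_iff hz hzy).2 hzE
  have hyx : IsDecisiveFor φ Eᶜ y x := hφ.isDecisiveFor_right hy hz hzy.symm hxy hyz
  exact (hφ.isDecisiveFor_compl_iff hx hxy).1 hyx h

theorem isDecisiveFor_of_isDecisiveFor (hφ : CSP φ) (h3 : 2 < (range φ).encard) {E : Set V}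
    {x y u w : A} (hx : x ∈ range φ) (hy : y ∈ range φ) (hxy : x ≠ y) (hu : u ∈ range φ)
    (huw : u ≠ w) (h : IsDecisiveFor φ E x y) : IsDecisiveFor φ E u w := by
  rcases eq_or_ne u y with rfl | huy
  · obtain ⟨z, hz, hzx, hzu⟩ := exists_mem_ne_ne_of_two_lt_encard h3 x u
    have hxz := hφ.isDecisiveFor_right hx hu hxy hzx h
    have huz := hφ.isDecisiveFor_left hx hz hu hzx.symm hzu.symm hxz
    exact hφ.isDecisiveFor_right hu hz hzu.symm huw.symm huz
  · have huy' := hφ.isDecisiveFor_left hx hy hu hxy huy h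
    exact hφ.isDecisiveFor_right hu hy huy huw.symm huy'

theorem isDecisive_of_isDecisiveFor (hφ : CSP φ) (h3 : 2 < (range φ).encard) {E : Set V}
    {x y : A} (hx : x ∈ range φ) (hy : y ∈ range φ) (hxy : x ≠ y)
    (h : IsDecisiveFor φ E x y) : IsDecisive φ E := by
  intro P c hc hpref
  by_contra hne
  have hdec : IsDecisiveFor φ E c (φ P) :=
    hφ.isDecisiveFor_of_isDecisiveFor h3 hx hy hxy hc hne h
  -- `Q` agrees with `P` on `E` and with the block profile of `hdec` off `E`
  let Q : SProfile V A := fun v => if v ∈ E then P v else rankedOrd [φ P, c]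
  have hQ : φ Q = φ P := hφ.eq_of_forall_ne_top fun v hv d hd => by
    by_cases hvE : v ∈ E
    · exact absurd (if_pos hvE) hv
    · rw [show Q v = rankedOrd [φ P, c] from if_neg hvE]; exact rankedOrd_cons_spref hd
  have hQdec : φ (blockProfile E [c, φ P] [φ P, c]) = φ Q :=
    hφ.eq_of_forall_ne_spref fun v hv => by
      by_cases hvE : v ∈ E
      · rw [hdec, hQ, show Q v = P v from if_pos hvE]; exact hpref v hvE
      · exact absurd (by rw [blockProfile_of_notMem _ _ hvE]; exact (if_neg hvE).symm) hv
  exact hne (hdec.symm.trans (hQdec.trans hQ))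

theorem isDecisive_or_isDecisive_compl (hφ : CSP φ) (h3 : 2 < (range φ).encard) (E : Set V) :
    IsDecisive φ E ∨ IsDecisive φ Eᶜ := by
  obtain ⟨x, hx, y, hy, hxy⟩ := one_lt_encard_iff_nontrivial.1 (h3.trans' (by norm_num))
  by_cases h : IsDecisiveFor φ E x y
  · exact Or.inl (hφ.isDecisive_of_isDecisiveFor h3 hx hy hxy h)
  · exact Or.inr (hφ.isDecisive_of_isDecisiveFor h3 hy hx hxy.symm
      ((hφ.isDecisiveFor_compl_iff hx hxy).2 h))

theorem isDecisive_inter (hφ : CSP φ) (h3 : 2 < (range φ).encard) {E₁ E₂ : Set V}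
    (h₁ : IsDecisive φ E₁) (h₂ : IsDecisive φ E₂) : IsDecisive φ (E₁ ∩ E₂) := by
  obtain ⟨a, ha, b, hb, hab⟩ := one_lt_encard_iff_nontrivial.1 (h3.trans' (by norm_num))
  obtain ⟨c, hc, hca, hcb⟩ := exists_mem_ne_ne_of_two_lt_encard h3 a b
  refine (hφ.isDecisive_or_isDecisive_compl h3 (E₁ ∩ E₂)).resolve_right fun h₃ => ?_
  -- a Condorcet cycle: `E₁` prefers `a` to `b`, `E₂` prefers `b` to `c`,
  -- and `(E₁ ∩ E₂)ᶜ` prefers `c` to `a`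
  let P : SProfile V A := fun v =>
    if v ∈ E₁ then (if v ∈ E₂ then rankedOrd [a, b, c] else rankedOrd [c, a, b])
    else rankedOrd [b, c, a]
  have hPa : φ P ≠ a := h₃.apply_ne hc hca fun v hv => by
    simp only [P]
    split_ifs with hv₁ hv₂
    · exact absurd ⟨hv₁, hv₂⟩ hv
    · exact rankedOrd_cons_spref hca.symm
    · exact rankedOrd_cons_cons_spref hcb hca.symm hab
  have hPb : φ P ≠ b := h₁.apply_ne ha hab fun v hv => by
    simp only [P, if_pos hv]
    split_ifs
    · exact rankedOrd_cons_spref hab.symm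
    · exact rankedOrd_cons_cons_spref hca.symm hab.symm hcb.symm
  have hPc : φ P ≠ c := h₂.apply_ne hb hcb.symm fun v hv => by
    simp only [P, if_pos hv]
    split_ifs
    · exact rankedOrd_cons_cons_spref hab.symm hcb hca
    · exact rankedOrd_cons_spref hcb
  refine hφ.isDecisive_univ.apply_ne ha (Ne.symm hPa) (fun v _ => ?_) rfl
  generalize φ P = d at hPa hPb hPc ⊢
  simp only [P]
  split_ifs <;> exact rankedOrd_spref_of_mem_of_notMem (by simp) (by simp [hPa, hPb, hPc])

theorem exists_ultrafilter_isDecisive (hφ : CSP φ) (h3 : 2 < (range φ).encard) :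
    ∃ F : Ultrafilter V, ∀ E, E ∈ F ↔ IsDecisive φ E := by
  let f : Filter V :=
    { sets := {E | IsDecisive φ E}
      univ_sets := hφ.isDecisive_univ
      sets_of_superset := IsDecisive.mono
      inter_sets := hφ.isDecisive_inter h3 }
  have : f.NeBot := by
    refine ⟨fun hbot => ?_⟩
    obtain ⟨x, ⟨P, rfl⟩, y, hy, hxy⟩ :=
      one_lt_encard_iff_nontrivial.1 (h3.trans' (by norm_num))
    have hempty : IsDecisive φ ∅ := Filter.empty_mem_iff_bot.2 hbot
    exact hxy (hempty P y hy fun v hv => absurd hv (notMem_empty v)).symm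
  refine ⟨.ofComplNotMemIff f fun E => ⟨?_, Filter.compl_notMem⟩, fun _ => Iff.rfl⟩
  exact (hφ.isDecisive_or_isDecisive_compl h3 E).resolve_right

end CSP

theorem IsDecisive.eq_of_dTop {φ : SProfile V A → A} {P : SProfile V A} {c : A}
    (h : IsDecisive φ (DTop (range φ) c P)) (hc : c ∈ range φ) : c = φ P := by
  by_contra hne
  exact hne (h P c hc fun v hv => hv _ (mem_range_self P) (Ne.symm hne))

theorem iUnion_dTop_eq_univ {Astar : Set A} (hfin : Astar.Finite) (hne : Astar.Nonempty)
    (P : SProfile V A) : ⋃ c ∈ Astar, DTop Astar c P = univ :=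
  eq_univ_of_forall fun v =>
    let ⟨_, hm, htop⟩ := exists_spref_top (P v) hfin hne
    mem_biUnion hm htop

theorem csp_of_ultrafilter {Astar : Set A} {φ : SProfile V A → A} (F : Ultrafilter V)
    (hF : ∀ P, φ P ∈ Astar ∧ DTop Astar (φ P) P ∈ F) : CSP φ := by
  rintro D P ⟨⟨v₀, hv₀⟩, Q, hQ, hgain⟩
  have hne : φ Q ≠ φ P := fun h => SPref.irrefl _ _ (h ▸ hgain v₀ hv₀)
  obtain ⟨v, hvP, hvQ⟩ := F.nonempty_of_mem (Filter.inter_mem (hF P).2 (hF Q).2)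
  have hPQ : SPref (P v) (φ P) (φ Q) := hvP _ (hF Q).1 hne
  by_cases hv : v ∈ D
  · exact hPQ.asymm (hgain v hv)
  · exact hPQ.asymm (hQ v hv ▸ hvQ _ (hF P).1 hne.symm)

/-- Theorem 1.1(ii): an scf on strict profiles whose range `A*` is finite of cardinality
at least three is coalitionally strategy-proof iff there is an ultrafilter `F` on `V`
such that `φ P` is the unique alternative `c ∈ A*` with `D(c,P) ∈ F`. -/
theorem finite_range_strict_representation
    (Astar : Set A) (hfin : Astar.Finite) (hcard : 3 ≤ Astar.ncard)
    (φ : SProfile V A → A) (hrange : Set.range φ = Astar) :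
    CSP φ ↔
      ∃ F : Ultrafilter V, ∀ P : SProfile V A,
        (φ P ∈ Astar ∧ DTop Astar (φ P) P ∈ F) ∧
        ∀ c ∈ Astar, DTop Astar c P ∈ F → c = φ P := by
  subst hrange
  refine ⟨fun hφ => ?_, fun ⟨F, hF⟩ => csp_of_ultrafilter F fun P => (hF P).1⟩
  have h3 : 2 < (range φ).encard := by
    rw [← hfin.cast_ncard_eq]; exact_mod_cast hcard
  obtain ⟨F, hF⟩ := hφ.exists_ultrafilter_isDecisive h3
  have huniq : ∀ P, ∀ c ∈ range φ, DTop (range φ) c P ∈ F → c = φ P :=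
    fun P c hc hcF => ((hF _).1 hcF).eq_of_dTop hc
  refine ⟨F, fun P => ⟨⟨mem_range_self P, ?_⟩, huniq P⟩⟩
  have hcover : ⋃ c ∈ range φ, DTop (range φ) c P ∈ F := by
    rw [iUnion_dTop_eq_univ hfin (range_nonempty_iff_nonempty.2 ⟨P⟩) P]; exact Filter.univ_mem
  obtain ⟨c, hc, hcF⟩ := (Ultrafilter.finite_biUnion_mem_iff hfin).1 hcover
  rwa [← huniq P c hc hcF]
end
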